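/- For every α > 0, the kernel K^α : ℝ² → ℝ² is continuous on all of ℝ² (including at the origin, where K^α(0) = 0), and there exists a constant C > 0, independent of α, such that |K^α(x)| ≤ C/α for all x ∈ ℝ². -/

import Mathlib

noncomputable section

open Real MeasureTheory Filter Set intervalIntegral Classical

abbrev E2 := EuclideanSpace ℝ (Fin 2)

/-- The modified Bessel function of the second kind of order one,
`K₁(r) = r ∫_{1}^{∞} e^{-rt} (t²-1)^{1/2} dt`. -/
def besselK1 (r : ℝ) : ℝ := r * ∫ t in Set.Ioi (1:ℝ), Real.exp (-r * t) * (t ^ 2 - 1) ^ ((1:ℝ)/2)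

/-- `DΨ^α(r) = (1/(2π)) (1/r - (1/α) K₁(r/α))`. -/
def DPsi (α r : ℝ) : ℝ := (1 / (2 * π)) * (1 / r - (1 / α) * besselK1 (r / α))

/-- `(x₁, x₂)^⊥ = (-x₂, x₁)`. -/
def perp (x : E2) : E2 := (WithLp.equiv 2 (Fin 2 → ℝ)).symm ![-(x 1), x 0]

/-- The smoothed Birkhoff–Rott kernel `K^α(x) = (x^⊥/|x|) DΨ^α(|x|)`, `K^α(0) = 0`. -/
def Kalpha (α : ℝ) (x : E2) : E2 := if x = 0 then 0 else (DPsi α ‖x‖ / ‖x‖) • perp x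

/-!
Since `1 / s = s ∫₀^∞ t e^{-st} dt` and the real square root `√(t² - 1)` vanishes on `(0, 1]`,
`1 / s - K₁(s) = s ∫₀^∞ e^{-st} (t - √(t² - 1)) dt`, while `DΨ^α(r) = DΨ¹(r / α) / α` and
`|K^α(x)| = |DΨ^α(|x|)|`. As `0 ≤ t - √(t² - 1) ≤ min(1, t^{-1/2})`, the Laplace integral yields
`0 ≤ 1 / s - K₁(s) ≤ 1`, which is the bound `|K^α| ≤ 1 / (2πα)`, and
`1 / s - K₁(s) ≤ s (1 / s)^{1/2} Γ(1/2) = √(π s)`, so `DΨ^α(r) → 0` as `r → 0⁺`: this is continuity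
of `K^α` at the origin. Elsewhere continuity comes from dominated convergence in the Laplace
integral.
-/

open Topology

lemma sqrt_sq_sub_one_le {t : ℝ} (ht : 0 ≤ t) : √(t ^ 2 - 1) ≤ t :=
  Real.sqrt_le_iff.mpr ⟨ht, by linarith⟩

lemma sub_sqrt_sq_sub_one_le_one (t : ℝ) : t - √(t ^ 2 - 1) ≤ 1 := by
  rcases le_total t 1 with ht | ht
  · linarith [Real.sqrt_nonneg (t ^ 2 - 1)]
  · linarith [Real.le_sqrt_of_sq_le (show (t - 1) ^ 2 ≤ t ^ 2 - 1 by nlinarith)]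

lemma sub_sqrt_sq_sub_one_le_inv_sqrt {t : ℝ} (ht : 0 < t) : t - √(t ^ 2 - 1) ≤ (√t)⁻¹ := by
  rw [← one_div, le_div_iff₀ (Real.sqrt_pos.mpr ht)]
  rcases le_total t 1 with h | h
  · rw [Real.sqrt_eq_zero'.mpr (by nlinarith), sub_zero]
    exact mul_le_one₀ h (Real.sqrt_nonneg t) (Real.sqrt_le_one.mpr h)
  · have hq := Real.sq_sqrt (show 0 ≤ t ^ 2 - 1 by nlinarith)
    have hsqrt : √t ≤ t := Real.sqrt_le_iff.mpr ⟨ht.le, by nlinarith⟩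
    nlinarith [sqrt_sq_sub_one_le ht.le, Real.sqrt_nonneg (t ^ 2 - 1)]

lemma integrableOn_rpow_mul_exp_neg_mul_Ioi {a r : ℝ} (ha : 0 < a) (hr : 0 < r) :
    IntegrableOn (fun t : ℝ => t ^ (a - 1) * exp (-(r * t))) (Ioi 0) :=
  Integrable.of_integral_ne_zero <| by
    rw [integral_rpow_mul_exp_neg_mul_Ioi ha hr]
    positivity

lemma continuousAt_integral_exp_neg_mul {f : ℝ → ℝ}
    (hf : AEStronglyMeasurable f (volume.restrict (Ioi 0))) {C : ℝ}
    (hC : ∀ t ∈ Ioi (0 : ℝ), ‖f t‖ ≤ C) {s : ℝ} (hs : 0 < s) :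
    ContinuousAt (fun r => ∫ t in Ioi 0, exp (-(r * t)) * f t) s := by
  refine continuousAt_of_dominated (bound := fun t => C * exp (-(s / 2 * t)))
    (Eventually.of_forall fun r => (by fun_prop : Continuous _).aestronglyMeasurable.mul hf) ?_
    ?_ (ae_of_all _ fun t => by fun_prop)
  · filter_upwards [lt_mem_nhds (half_lt_self hs)] with r hr
    filter_upwards [ae_restrict_mem measurableSet_Ioi] with t ht
    rw [norm_mul, Real.norm_of_nonneg (exp_nonneg _), mul_comm]
    gcongr
    · exact (norm_nonneg _).trans (hC t ht)
    · exact hC t ht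
    · exact ht.le
  · simpa [neg_mul] using (exp_neg_integrableOn_Ioi 0 (half_pos hs)).const_mul C

lemma besselK1_eq_integral_Ioi_zero (s : ℝ) :
    besselK1 s = s * ∫ t in Ioi 0, exp (-(s * t)) * √(t ^ 2 - 1) := by
  simp_rw [besselK1, ← Real.sqrt_eq_rpow, neg_mul]
  congr 1
  refine (setIntegral_eq_of_subset_of_forall_sdiff_eq_zero measurableSet_Ioi
    (Ioi_subset_Ioi zero_le_one) fun t ht => ?_).symm
  rw [Real.sqrt_eq_zero'.mpr (by nlinarith [notMem_Ioi.mp ht.2, mem_Ioi.mp ht.1]), mul_zero]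

def laplaceSqrtGap (s : ℝ) : ℝ := ∫ t in Ioi 0, exp (-(s * t)) * (t - √(t ^ 2 - 1))

lemma one_div_sub_besselK1_eq {s : ℝ} (hs : 0 < s) :
    1 / s - besselK1 s = s * laplaceSqrtGap s := by
  have two_sub_one : (2 : ℝ) - 1 = 1 := by norm_num
  have hmoment : IntegrableOn (fun t => exp (-(s * t)) * t) (Ioi 0) := by
    simp_rw [mul_comm (exp _)]
    simpa [two_sub_one] using integrableOn_rpow_mul_exp_neg_mul_Ioi two_pos hs
  have hval : ∫ t in Ioi 0, exp (-(s * t)) * t = 1 / s ^ 2 := by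
    simp_rw [mul_comm (exp _)]
    simpa [two_sub_one] using integral_rpow_mul_exp_neg_mul_Ioi two_pos hs
  have hbessel : IntegrableOn (fun t => exp (-(s * t)) * √(t ^ 2 - 1)) (Ioi 0) := by
    refine hmoment.mono' (by fun_prop) ?_
    filter_upwards [ae_restrict_mem measurableSet_Ioi] with t ht
    rw [norm_mul, Real.norm_of_nonneg (exp_nonneg _), Real.norm_of_nonneg (Real.sqrt_nonneg _)]
    gcongr
    exact sqrt_sq_sub_one_le ht.le
  rw [laplaceSqrtGap, besselK1_eq_integral_Ioi_zero]
  simp_rw [mul_sub]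
  rw [integral_sub hmoment hbessel, hval]
  field_simp

lemma integrableOn_exp_neg_mul_mul_sub_sqrt {s : ℝ} (hs : 0 < s) :
    IntegrableOn (fun t => exp (-(s * t)) * (t - √(t ^ 2 - 1))) (Ioi 0) := by
  have hexp : IntegrableOn (fun t => exp (-(s * t))) (Ioi 0) := by
    simpa using integrableOn_rpow_mul_exp_neg_mul_Ioi one_pos hs
  refine hexp.mono' (by fun_prop) ?_
  filter_upwards [ae_restrict_mem measurableSet_Ioi] with t ht
  rw [norm_mul, Real.norm_of_nonneg (exp_nonneg _),
    Real.norm_of_nonneg (sub_nonneg.mpr (sqrt_sq_sub_one_le ht.le))]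
  exact mul_le_of_le_one_right (exp_nonneg _) (sub_sqrt_sq_sub_one_le_one t)

lemma laplaceSqrtGap_nonneg (s : ℝ) : 0 ≤ laplaceSqrtGap s :=
  setIntegral_nonneg measurableSet_Ioi fun _ ht =>
    mul_nonneg (exp_nonneg _) (sub_nonneg.mpr (sqrt_sq_sub_one_le (le_of_lt ht)))

lemma mul_laplaceSqrtGap_le_one {s : ℝ} (hs : 0 < s) : s * laplaceSqrtGap s ≤ 1 := by
  have hval : ∫ t in Ioi 0, exp (-(s * t)) = 1 / s := by
    simpa using integral_rpow_mul_exp_neg_mul_Ioi one_pos hs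
  have hle : laplaceSqrtGap s ≤ 1 / s := by
    rw [← hval]
    refine setIntegral_mono_on (integrableOn_exp_neg_mul_mul_sub_sqrt hs)
      (by simpa using integrableOn_rpow_mul_exp_neg_mul_Ioi one_pos hs) measurableSet_Ioi
      fun t _ => mul_le_of_le_one_right (exp_nonneg _) (sub_sqrt_sq_sub_one_le_one t)
  calc s * laplaceSqrtGap s ≤ s * (1 / s) := by gcongr
    _ = 1 := by field_simp

lemma mul_laplaceSqrtGap_le_sqrt {s : ℝ} (hs : 0 < s) : s * laplaceSqrtGap s ≤ √(π * s) := by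
  have hle : laplaceSqrtGap s ≤ (1 / s) ^ (1 / 2 : ℝ) * Real.Gamma (1 / 2) := by
    rw [← integral_rpow_mul_exp_neg_mul_Ioi one_half_pos hs]
    refine setIntegral_mono_on (integrableOn_exp_neg_mul_mul_sub_sqrt hs)
      (integrableOn_rpow_mul_exp_neg_mul_Ioi one_half_pos hs) measurableSet_Ioi fun t ht => ?_
    rw [mul_comm, show t ^ ((1 / 2 : ℝ) - 1) = (√t)⁻¹ by
      rw [Real.sqrt_eq_rpow, ← Real.rpow_neg ht.le]; norm_num]
    exact mul_le_mul_of_nonneg_right (sub_sqrt_sq_sub_one_le_inv_sqrt ht) (exp_nonneg _)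
  calc s * laplaceSqrtGap s ≤ s * ((1 / s) ^ (1 / 2 : ℝ) * Real.Gamma (1 / 2)) := by gcongr
    _ = √(π * s) := by
      rw [Real.Gamma_one_half_eq, ← Real.sqrt_eq_rpow, Real.sqrt_mul pi_pos.le, one_div,
        Real.sqrt_inv]
      have hsq := Real.sq_sqrt hs.le
      have hpos := Real.sqrt_pos.mpr hs
      field_simp
      nlinarith

lemma continuousOn_laplaceSqrtGap : ContinuousOn laplaceSqrtGap (Ioi 0) := fun _ hs =>
  (continuousAt_integral_exp_neg_mul (by fun_prop) (C := 1) (fun t ht => by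
    rw [Real.norm_of_nonneg (sub_nonneg.mpr (sqrt_sq_sub_one_le (le_of_lt ht)))]
    exact sub_sqrt_sq_sub_one_le_one t) hs).continuousWithinAt

lemma DPsi_zero (α : ℝ) : DPsi α 0 = 0 := by
  simp [DPsi, besselK1]

lemma DPsi_eq_div {α : ℝ} (hα : α ≠ 0) (r : ℝ) : DPsi α r = DPsi 1 (r / α) / α := by
  simp only [DPsi, div_one, one_div_div]
  field_simp

lemma DPsi_one_eq {s : ℝ} (hs : 0 < s) : DPsi 1 s = s * laplaceSqrtGap s / (2 * π) := by
  rw [DPsi, div_one, div_one, one_mul, one_div_sub_besselK1_eq hs]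
  ring

lemma abs_DPsi_one_le {s : ℝ} (hs : 0 ≤ s) : |DPsi 1 s| ≤ 1 / (2 * π) := by
  rcases hs.eq_or_lt with rfl | hs
  · rw [DPsi_zero, abs_zero]
    positivity
  · rw [DPsi_one_eq hs, abs_of_nonneg (by have := laplaceSqrtGap_nonneg s; positivity)]
    gcongr
    exact mul_laplaceSqrtGap_le_one hs

lemma continuousOn_DPsi_one : ContinuousOn (DPsi 1) (Ici 0) := by
  intro s hs
  rcases (mem_Ici.mp hs).eq_or_lt with rfl | hs
  · rw [← continuousWithinAt_Ioi_iff_Ici, ContinuousWithinAt, DPsi_zero]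
    have hsqrt : Tendsto (fun s => √(π * s) / (2 * π)) (𝓝[>] 0) (𝓝 0) := by
      simpa using ((by fun_prop : Continuous fun s => √(π * s) / (2 * π)).tendsto 0).mono_left
        nhdsWithin_le_nhds
    refine tendsto_of_tendsto_of_tendsto_of_le_of_le' tendsto_const_nhds hsqrt ?_ ?_ <;>
      filter_upwards [self_mem_nhdsWithin] with s (hs : 0 < s) <;> rw [DPsi_one_eq hs]
    · have := laplaceSqrtGap_nonneg s
      positivity
    · gcongr
      exact mul_laplaceSqrtGap_le_sqrt hs
  · have heq : (fun r => r * laplaceSqrtGap r / (2 * π)) =ᶠ[𝓝 s] DPsi 1 :=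
      eventually_of_mem (Ioi_mem_nhds hs) fun r hr => (DPsi_one_eq hr).symm
    exact ((continuousAt_id.mul (continuousOn_laplaceSqrtGap.continuousAt
      (Ioi_mem_nhds hs))).div_const _).congr heq |>.continuousWithinAt

lemma continuousOn_DPsi {α : ℝ} (hα : 0 < α) : ContinuousOn (DPsi α) (Ici 0) := by
  rw [show DPsi α = fun r => DPsi 1 (r / α) / α from funext (DPsi_eq_div hα.ne')]
  exact (continuousOn_DPsi_one.comp (continuous_id.div_const α).continuousOn
    fun r hr => div_nonneg hr hα.le).div_const α

lemma abs_DPsi_le {α r : ℝ} (hα : 0 < α) (hr : 0 ≤ r) : |DPsi α r| ≤ 1 / (2 * π) / α := by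
  rw [DPsi_eq_div hα.ne', abs_div, abs_of_pos hα]
  gcongr
  exact abs_DPsi_one_le (div_nonneg hr hα.le)

lemma norm_perp (x : E2) : ‖perp x‖ = ‖x‖ := by
  simp [EuclideanSpace.norm_eq, Fin.sum_univ_two, perp, add_comm]

lemma continuous_perp : Continuous perp := by
  refine (PiLp.continuous_toLp 2 _).comp (continuous_pi fun i => ?_)
  fin_cases i <;> simp <;> fun_prop

lemma Kalpha_eq (α : ℝ) (x : E2) : Kalpha α x = (DPsi α ‖x‖ / ‖x‖) • perp x := by
  rw [Kalpha]
  split_ifs with hx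
  · simp [hx]
  · rfl

lemma norm_Kalpha (α : ℝ) (x : E2) : ‖Kalpha α x‖ = |DPsi α ‖x‖| := by
  rcases eq_or_ne x 0 with rfl | hx
  · simp [Kalpha, DPsi_zero]
  · rw [Kalpha_eq, norm_smul, norm_perp, norm_div, Real.norm_eq_abs, norm_norm,
      div_mul_cancel₀ _ (norm_ne_zero_iff.mpr hx)]

lemma continuous_Kalpha {α : ℝ} (hα : 0 < α) : Continuous (Kalpha α) := by
  have hD : Continuous fun x : E2 => DPsi α ‖x‖ :=
    (continuousOn_DPsi hα).comp_continuous continuous_norm norm_nonneg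
  refine continuous_iff_continuousAt.mpr fun x => ?_
  rcases eq_or_ne x 0 with rfl | hx
  · rw [ContinuousAt, show Kalpha α 0 = 0 from if_pos rfl, tendsto_zero_iff_norm_tendsto_zero]
    simpa [norm_Kalpha, DPsi_zero] using hD.abs.tendsto 0
  · rw [show Kalpha α = _ from funext (Kalpha_eq α)]
    exact (hD.continuousAt.div continuous_norm.continuousAt (norm_ne_zero_iff.mpr hx)).smul
      continuous_perp.continuousAt

/-- For every `α > 0` the smoothed kernel `K^α` is continuous on all of `ℝ²`
(including at the origin), and `|K^α(x)| ≤ C/α` with `C` independent of `α`. -/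
theorem Kalpha_continuous_and_bounded :
    (∀ α : ℝ, 0 < α → Continuous (Kalpha α)) ∧
    (∃ C : ℝ, 0 < C ∧ ∀ α : ℝ, 0 < α → ∀ x : E2, ‖Kalpha α x‖ ≤ C / α) :=
  ⟨fun _ hα => continuous_Kalpha hα, 1 / (2 * π), by positivity, fun _ hα x =>
    (norm_Kalpha _ x).trans_le (abs_DPsi_le hα (norm_nonneg x))⟩
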